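/- The operation f·_d τ := (b/(b+c))·(fτ + (1/b)·df∧i_Rτ) for homogeneous f ∈ S(c), τ ∈ Ω^r(b) (with the usual product when b = c = 0) is associative over S: for all homogeneous f ∈ S(c), g ∈ S(e) and τ ∈ Ω^r(b), (gf)·_d τ = g·_d (f·_d τ). Consequently ·_d defines an S-module structure on ⊕_{b≥1} Ω^r(b) extending scalar multiplication by ℂ. -/

import Mathlib

/-!
Common setup: a concrete model of the exterior algebra `Ω` of differential forms over
`S = ℂ[x₁,…,xₙ]`.  An element of `Ω` is encoded as a function assigning to each subset
`I ⊆ {1,…,n}` the polynomial coefficient of `dx_I = dx_{i₁} ∧ … ∧ dx_{i_r}` (indices in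
increasing order).  The `r`-forms are the elements supported on subsets of cardinality `r`.
-/

open MvPolynomial

noncomputable section

/-- The polynomial ring `S = ℂ[x₁,…,xₙ]`. -/
abbrev S (n : ℕ) : Type := MvPolynomial (Fin n) ℂ

/-- The exterior algebra of differential forms over `S`: a form is given by its coefficient
at each basis monomial `dx_I`, `I ⊆ {1,…,n}`. -/
abbrev Ω (n : ℕ) : Type := Finset (Fin n) → S n

variable {n : ℕ}

/-- The sign `(-1)^{#{(i,j) ∈ I × J : j < i}}` arising when reordering `dx_I ∧ dx_J`. -/
def sgnMerge (I J : Finset (Fin n)) : ℤ :=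
  (-1) ^ (∑ i ∈ I, (J.filter (fun j => j < i)).card)

/-- Exterior (wedge) product of forms. -/
def wedge (μ τ : Ω n) : Ω n :=
  fun K => ∑ I ∈ K.powerset, (sgnMerge I (K \ I) : S n) * μ I * τ (K \ I)

/-- Contraction `i_X` with a vector field `X = Σ_k X_k ∂/∂x_k` (given by its components). -/
def contr (X : Fin n → S n) (τ : Ω n) : Ω n :=
  fun J => ∑ k ∈ Jᶜ, ((-1 : S n) ^ (J.filter (fun j => j < k)).card) * X k * τ (insert k J)

/-- The exterior differential `d`. -/
def extd (τ : Ω n) : Ω n :=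
  fun I => ∑ k ∈ I, ((-1 : S n) ^ (I.filter (fun j => j < k)).card) * pderiv k (τ (I.erase k))

/-- The radial vector field `R = Σ_k x_k ∂/∂x_k`. -/
def radial (n : ℕ) : Fin n → S n := fun k => X k

/-- The unit `1 ∈ Ω⁰`. -/
def oneForm (n : ℕ) : Ω n := fun I => if I = ∅ then 1 else 0

/-- A polynomial regarded as a `0`-form. -/
def ofPoly (f : S n) : Ω n := fun I => if I = ∅ then f else 0

/-- The basic `1`-form `dx_k`. -/
def dx (k : Fin n) : Ω n := fun I => if I = {k} then 1 else 0

/-- `τ` is an `r`-form, i.e. `τ ∈ Ω^r`. -/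
def IsForm (τ : Ω n) (r : ℕ) : Prop := ∀ I : Finset (Fin n), I.card ≠ r → τ I = 0

/-- `τ ∈ Ω^z` for an integer `z` (so `τ = 0` when `z < 0`). -/
def IsFormZ (τ : Ω n) (z : ℤ) : Prop := ∀ I : Finset (Fin n), (I.card : ℤ) ≠ z → τ I = 0

/-- `τ ∈ Ω^r(b)`: an `r`-form, homogeneous of total degree `b`, where each `x_i` and each
`dx_i` has degree `1` (this is the grading by the Lie derivative along the radial field). -/
def IsHomogForm (τ : Ω n) (r b : ℕ) : Prop :=
  IsForm τ r ∧ ∀ (I : Finset (Fin n)) (m : Fin n →₀ ℕ),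
    coeff m (τ I) ≠ 0 → (∑ i ∈ m.support, m i) + I.card = b

/-- The coordinate vector field `∂/∂x_k`. -/
def coordVF (n : ℕ) (k : Fin n) : Fin n → S n := fun j => if j = k then 1 else 0

/-- Contraction `i_L` with a vector valued differential form `L ∈ Ω^{q+1} ⊗_S T`,
encoded by its components `L k ∈ Ω^{q+1}` with respect to the basis `∂/∂x_k` of `T`,
so `L = Σ_k (L k) ⊗ ∂/∂x_k` and `i_L τ = Σ_k (L k) ∧ i_{∂/∂x_k} τ`. -/
def vcontr (L : Fin n → Ω n) (τ : Ω n) : Ω n :=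
  ∑ k : Fin n, wedge (L k) (contr (coordVF n k) τ)

/-- The Lie derivative `L_K = [i_K, d] = i_K ∘ d + (-1)^q d ∘ i_K` with respect to a vector
valued form `K ∈ Ω^q ⊗_S T` (here `i_K` has degree `q - 1` and `d` has degree `1`). -/
def lieD (q : ℤ) (K : Fin n → Ω n) (τ : Ω n) : Ω n :=
  vcontr K (extd τ) + ((-1 : ℂ) ^ q) • extd (vcontr K τ)

/-- The identity vector valued `1`-form `Id = Σ_k dx_k ⊗ ∂/∂x_k ∈ Ω¹ ⊗_S T`. -/
def idVF (n : ℕ) : Fin n → Ω n := fun k => dx k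

/-- `D : Ω → Ω` is a (ℂ-linear) derivation of degree `q`. -/
structure IsDerivationOfDegree (D : Ω n → Ω n) (q : ℤ) : Prop where
  map_add : ∀ μ τ : Ω n, D (μ + τ) = D μ + D τ
  map_smul : ∀ (a : ℂ) (τ : Ω n), D (a • τ) = a • D τ
  map_degree : ∀ (r : ℕ) (τ : Ω n), IsForm τ r → IsFormZ (D τ) ((r : ℤ) + q)
  leibniz : ∀ (r : ℕ) (μ τ : Ω n), IsForm μ r →
    D (wedge μ τ) = wedge (D μ) τ + ((-1 : ℂ) ^ ((r : ℤ) * q)) • wedge μ (D τ)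

/-- `D : Ω → Ω` is a differential operator of order `1` and degree `q`, i.e. a ℂ-linear
map of degree `q` with `[[D, λ_μ], λ_τ] = 0` for all `μ, τ ∈ Ω` (stated on homogeneous
`μ ∈ Ω^r`, `τ ∈ Ω^s`, with the graded commutator signs). -/
structure IsDiffOpOfDegree (D : Ω n → Ω n) (q : ℤ) : Prop where
  map_add : ∀ μ τ : Ω n, D (μ + τ) = D μ + D τ
  map_smul : ∀ (a : ℂ) (τ : Ω n), D (a • τ) = a • D τ
  map_degree : ∀ (r : ℕ) (τ : Ω n), IsForm τ r → IsFormZ (D τ) ((r : ℤ) + q)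
  order_one : ∀ (r s : ℕ) (μ τ : Ω n), IsForm μ r → IsForm τ s → ∀ σ : Ω n,
    D (wedge μ (wedge τ σ)) - ((-1 : ℂ) ^ (q * (r : ℤ))) • wedge μ (D (wedge τ σ)) -
      ((-1 : ℂ) ^ ((q + (r : ℤ)) * (s : ℤ))) •
        (wedge τ (D (wedge μ σ)) - ((-1 : ℂ) ^ (q * (r : ℤ))) • wedge τ (wedge μ (D σ))) = 0

/-- The deformed action `f · τ = α(r,b,c)·fτ + β(r,b,c)·df ∧ i_R τ` of a homogeneous
polynomial `f ∈ S(c)` on `τ ∈ Ω^r(b)`, for given scalar families `α`, `β`. -/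
def defAct (α β : ℕ → ℕ → ℕ → ℂ) (r b c : ℕ) (f : S n) (τ : Ω n) : Ω n :=
  α r b c • (f • τ) + β r b c • wedge (extd (ofPoly f)) (contr (radial n) τ)

/-- The differential operator `ω̃₁ ∧ L_Id + ω̃₂ ∧ i_Id + λ_μ̃`, evaluated on `τ ∈ Ω^r`:
`τ ↦ ω̃₁ ∧ dτ + r · ω̃₂ ∧ τ + μ̃ ∧ τ`. -/
def opId (ω₁ ω₂ μ : Ω n) (r : ℕ) (τ : Ω n) : Ω n :=
  wedge ω₁ (extd τ) + (r : ℂ) • wedge ω₂ τ + wedge μ τ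

/-- The quantity `b - a·(r/q + (-1)^q t)`. -/
def denomA (q a : ℕ) (t : ℂ) (r b : ℕ) : ℂ :=
  (b : ℂ) - (a : ℂ) * ((r : ℂ) / (q : ℂ) + (-1 : ℂ) ^ q * t)

/-- `α(r,b,c) = (b - a(r/q + (-1)^q t)) / (b + c - a(r/q + (-1)^q t))`. -/
def alphaA (q a : ℕ) (t : ℂ) (r b c : ℕ) : ℂ :=
  denomA q a t r b / (denomA q a t r b + (c : ℂ))

/-- `β(r,b,c) = α(r,b,c) / (b - a(r/q + (-1)^q t))`. -/
def betaA (q a : ℕ) (t : ℂ) (r b c : ℕ) : ℂ :=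
  alphaA q a t r b c / denomA q a t r b

/-- A linearizable differential operator
`D = ω₁ ∧ L_Id + ((1/q)dω₁ + ω₂) ∧ i_Id + (t·λ_{dω₁} + λ_μ)`, evaluated on `τ ∈ Ω^r`. -/
def linOp (q : ℕ) (t : ℂ) (ω₁ ω₂ μ : Ω n) (r : ℕ) (τ : Ω n) : Ω n :=
  wedge ω₁ (extd τ) + (r : ℂ) • wedge ((q : ℂ)⁻¹ • extd ω₁ + ω₂) τ +
    wedge (t • extd ω₁ + μ) τ

/-- The deformed action linearizing the exterior differential:
`f ·_d τ = (b/(b+c))·(fτ + (1/b)·df ∧ i_R τ)`, with `f ·_d τ = fτ` when `b = 0`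
(in particular when `b = c = 0`). -/
def dotdT (b c : ℕ) (f : S n) (τ : Ω n) : Ω n :=
  if b = 0 then f • τ
  else ((b : ℂ) / ((b : ℂ) + (c : ℂ))) •
    (f • τ + ((b : ℂ))⁻¹ • wedge (extd (ofPoly f)) (contr (radial n) τ))

/-- The deformed action linearizing the exterior differential:
`f ·_d τ = (b/(b+c))·(fτ + (1/b)·df ∧ i_R τ)`, with the usual product when `b = c = 0`. -/
def dotd (b c : ℕ) (f : S n) (τ : Ω n) : Ω n :=
  if b = 0 ∧ c = 0 then f • τ
  else ((b : ℂ) / ((b : ℂ) + (c : ℂ))) •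
    (f • τ + ((b : ℂ))⁻¹ • wedge (extd (ofPoly f)) (contr (radial n) τ))

/-- `κ(r) = (r+1)/2`. -/
def kapC (r : ℕ) : ℂ := ((r : ℂ) + 1) / 2

/-- The differential operator `ω△ : Ω^r → Ω^{r+2}`, `ω△τ = ω ∧ dτ + κ(r)·dω ∧ τ`. -/
def triOp (ω : Ω n) (r : ℕ) (τ : Ω n) : Ω n :=
  wedge ω (extd τ) + kapC r • wedge (extd ω) τ

/-- The deformed action linearizing `ω△`:
`f ·_{ω△} τ = (1/(b+c-κ(r)a))·[(b-κ(r)a)·fτ + df ∧ i_R τ]`. -/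
def triAct (a r b c : ℕ) (f : S n) (τ : Ω n) : Ω n :=
  ((b : ℂ) + (c : ℂ) - kapC r * (a : ℂ))⁻¹ •
    (((b : ℂ) - kapC r * (a : ℂ)) • (f • τ) + wedge (extd (ofPoly f)) (contr (radial n) τ))

/-- The Lie derivative `L_X ω = i_X (dω) + d (i_X ω)` along a vector field `X`. -/
def lieVF (X : Fin n → S n) (ω : Ω n) : Ω n := contr X (extd ω) + extd (contr X ω)

end

/-!
In coordinates, `i_X = Σ_k X_k i_{∂_k}` and `df ∧ · = Σ_l ∂_l f · (dx_l ∧ ·)`,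
and the anticommutation relations `i_{∂_k}(dx_l ∧ ·) + dx_l ∧ i_{∂_k} = δ_{kl}`,
`i_{∂_k} i_{∂_l} = -i_{∂_l} i_{∂_k}` give `i_X(df ∧ σ) = X(f) σ - df ∧ i_X σ` and `i_X² = 0`.
With Euler's identity `R(f) = c f` this yields `i_R(df ∧ i_R τ) = c f i_R τ`, hence
`i_R(f ·_d τ) = f i_R τ` when `b ≠ 0`. Combined with `d(gf) = g df + f dg`, both sides of the
associativity law become `(b+c+e)⁻¹ (b gf τ + g df ∧ i_R τ + f dg ∧ i_R τ)`. When `b = 0` and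
`c ≠ 0` the action is zero, which settles the remaining cases.
-/

open Finset

noncomputable section

variable {n : ℕ}

def contrₗ (X : Fin n → S n) : Ω n →ₗ[S n] Ω n where
  toFun := contr X
  map_add' τ₁ τ₂ := by
    funext J
    simp only [contr, Pi.add_apply, mul_add, sum_add_distrib]
  map_smul' f τ := by
    funext J
    simp only [contr, Pi.smul_apply, smul_eq_mul, RingHom.id_apply, mul_sum]
    exact sum_congr rfl fun _ _ => by ring

def wedgeₗ : Ω n →ₗ[S n] Ω n →ₗ[S n] Ω n :=
  LinearMap.mk₂ (S n) wedge
    (fun μ₁ μ₂ τ => by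
      funext K
      simp only [wedge, Pi.add_apply, mul_add, add_mul, sum_add_distrib])
    (fun f μ τ => by
      funext K
      simp only [wedge, Pi.smul_apply, smul_eq_mul, mul_sum]
      exact sum_congr rfl fun _ _ => by ring)
    (fun μ τ₁ τ₂ => by
      funext K
      simp only [wedge, Pi.add_apply, mul_add, sum_add_distrib])
    (fun f μ τ => by
      funext K
      simp only [wedge, Pi.smul_apply, smul_eq_mul, mul_sum]
      exact sum_congr rfl fun _ _ => by ring)

section Linearity

variable {R ι : Type*} [CommSemiring R] [Algebra R (S n)]

lemma contr_add (X : Fin n → S n) (τ₁ τ₂ : Ω n) :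
    contr X (τ₁ + τ₂) = contr X τ₁ + contr X τ₂ :=
  map_add (contrₗ X) τ₁ τ₂

lemma contr_zero (X : Fin n → S n) : contr X (0 : Ω n) = 0 :=
  map_zero (contrₗ X)

lemma contr_smul (X : Fin n → S n) (a : R) (τ : Ω n) : contr X (a • τ) = a • contr X τ :=
  LinearMap.map_smul_of_tower (contrₗ X) a τ

lemma contr_sum (X : Fin n → S n) (s : Finset ι) (τ : ι → Ω n) :
    contr X (∑ i ∈ s, τ i) = ∑ i ∈ s, contr X (τ i) :=
  map_sum (contrₗ X) τ s

lemma wedge_add_left (μ₁ μ₂ τ : Ω n) : wedge (μ₁ + μ₂) τ = wedge μ₁ τ + wedge μ₂ τ :=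
  LinearMap.map_add₂ wedgeₗ μ₁ μ₂ τ

lemma wedge_zero_left (τ : Ω n) : wedge 0 τ = 0 :=
  LinearMap.map_zero₂ wedgeₗ τ

lemma wedge_smul_left (a : R) (μ τ : Ω n) : wedge (a • μ) τ = a • wedge μ τ :=
  LinearMap.map_smul_of_tower (wedgeₗ.flip τ) a μ

lemma wedge_sum_left (s : Finset ι) (μ : ι → Ω n) (τ : Ω n) :
    wedge (∑ i ∈ s, μ i) τ = ∑ i ∈ s, wedge (μ i) τ :=
  map_sum (wedgeₗ.flip τ) μ s

lemma wedge_zero_right (μ : Ω n) : wedge μ 0 = 0 :=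
  map_zero (wedgeₗ μ)

lemma wedge_smul_right (a : R) (μ τ : Ω n) : wedge μ (a • τ) = a • wedge μ τ :=
  LinearMap.map_smul_of_tower (wedgeₗ μ) a τ

lemma wedge_sum_right (s : Finset ι) (μ : Ω n) (τ : ι → Ω n) :
    wedge μ (∑ i ∈ s, τ i) = ∑ i ∈ s, wedge μ (τ i) :=
  map_sum (wedgeₗ μ) τ s

end Linearity

def coordSign (J : Finset (Fin n)) (k : Fin n) : S n := (-1) ^ (J.filter (· < k)).card

lemma coordSign_mul_self (J : Finset (Fin n)) (k : Fin n) : coordSign J k * coordSign J k = 1 := by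
  rw [coordSign, ← pow_add, ← two_mul, pow_mul, neg_one_sq, one_pow]

lemma coordSign_insert_self (J : Finset (Fin n)) (k : Fin n) :
    coordSign (insert k J) k = coordSign J k := by
  rw [coordSign, coordSign, filter_insert, if_neg (lt_irrefl k)]

lemma coordSign_erase_self (J : Finset (Fin n)) (k : Fin n) :
    coordSign (J.erase k) k = coordSign J k := by
  rw [coordSign, coordSign, filter_erase, erase_eq_of_notMem (by simp)]

lemma coordSign_insert {J : Finset (Fin n)} {k : Fin n} (hk : k ∉ J) (l : Fin n) :
    coordSign (insert k J) l = (if k < l then -1 else 1) * coordSign J l := by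
  rw [coordSign, coordSign, filter_insert]
  split_ifs
  · rw [card_insert_of_notMem (by simp [hk]), pow_succ, mul_comm]
  · rw [one_mul]

lemma coordSign_erase {J : Finset (Fin n)} {k : Fin n} (hk : k ∈ J) (l : Fin n) :
    coordSign (J.erase k) l = (if k < l then -1 else 1) * coordSign J l := by
  conv_rhs => rw [← insert_erase hk, coordSign_insert (notMem_erase k J), ← mul_assoc]
  split_ifs <;> norm_num

lemma contr_coordVF_apply (k : Fin n) (τ : Ω n) (J : Finset (Fin n)) :
    contr (coordVF n k) τ J = if k ∈ J then 0 else coordSign J k * τ (insert k J) := by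
  simp [contr, coordVF, coordSign]

lemma wedge_dx_apply (k : Fin n) (τ : Ω n) (K : Finset (Fin n)) :
    wedge (dx k) τ K = if k ∈ K then coordSign K k * τ (K.erase k) else 0 := by
  simp [wedge, dx, sgnMerge, sdiff_singleton_eq_erase, ← coordSign_erase_self K k]
  rfl

lemma contr_coordVF_wedge_dx_add (k l : Fin n) (τ : Ω n) :
    contr (coordVF n k) (wedge (dx l) τ) + wedge (dx l) (contr (coordVF n k) τ) =
      if k = l then τ else 0 := by
  funext J
  simp only [Pi.add_apply, contr_coordVF_apply, wedge_dx_apply]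
  by_cases hkl : k = l
  · subst hkl
    by_cases hk : k ∈ J
    · simp [hk, coordSign_erase_self, coordSign_mul_self, insert_erase hk, ← mul_assoc]
    · simp [hk, coordSign_insert_self, coordSign_mul_self, erase_insert hk, ← mul_assoc]
  · by_cases hk : k ∈ J
    · simp [hk, hkl]
    by_cases hl : l ∈ J
    · simp only [hk, hl, mem_insert, mem_erase, if_false, if_true, or_true, Ne.symm hkl,
        coordSign_insert hk, coordSign_erase hl, erase_insert_of_ne hkl, Pi.zero_apply, if_neg hkl]
      rcases lt_or_gt_of_ne hkl with h | h
      · simp [h, h.not_gt]; ring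
      · simp [h, h.not_gt]; ring
    · simp [hk, hl, Ne.symm hkl, hkl]

lemma contr_coordVF_anticomm (k l : Fin n) (τ : Ω n) :
    contr (coordVF n k) (contr (coordVF n l) τ) = -contr (coordVF n l) (contr (coordVF n k) τ) := by
  funext J
  simp only [Pi.neg_apply, contr_coordVF_apply]
  by_cases hkl : k = l
  · subst hkl; simp
  by_cases hk : k ∈ J
  · simp [hk]
  by_cases hl : l ∈ J
  · simp [hl]
  simp only [hk, hl, mem_insert, hkl, Ne.symm hkl, or_self, if_false, coordSign_insert hk,
    coordSign_insert hl, insert_comm l k]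
  rcases lt_or_gt_of_ne hkl with h | h
  · simp [h, h.not_gt]; ring
  · simp [h, h.not_gt]; ring

lemma contr_eq_sum (X : Fin n → S n) (τ : Ω n) :
    contr X τ = ∑ k, X k • contr (coordVF n k) τ := by
  funext J
  simp only [Finset.sum_apply, Pi.smul_apply, contr_coordVF_apply, smul_eq_mul, mul_ite, mul_zero,
    sum_ite, sum_const_zero, zero_add, filter_notMem_eq_sdiff, ← compl_eq_univ_sdiff]
  exact sum_congr rfl fun _ _ => by rw [coordSign]; ring

lemma extd_ofPoly_eq_sum (f : S n) : extd (ofPoly f) = ∑ k, pderiv k f • dx k := by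
  funext I
  simp only [extd, ofPoly, Finset.sum_apply, Pi.smul_apply, dx, smul_eq_mul, mul_ite, mul_one,
    mul_zero]
  by_cases hI : ∃ l, I = {l}
  · obtain ⟨l, rfl⟩ := hI
    simp [filter_singleton]
  · push Not at hI
    rw [sum_eq_zero fun k _ => if_neg (hI k)]
    refine sum_eq_zero fun k hk => ?_
    rw [if_neg fun h => hI k ?_, map_zero, mul_zero]
    rw [← insert_erase hk, h, insert_empty]

lemma contr_wedge_extd_ofPoly (X : Fin n → S n) (f : S n) (τ : Ω n) :
    contr X (wedge (extd (ofPoly f)) τ) =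
      (∑ k, X k * pderiv k f) • τ - wedge (extd (ofPoly f)) (contr X τ) := by
  have hcar : ∀ k l, contr (coordVF n k) (wedge (dx l) τ) =
      (if k = l then τ else 0) - wedge (dx l) (contr (coordVF n k) τ) := fun k l =>
    eq_sub_of_add_eq (contr_coordVF_wedge_dx_add k l τ)
  simp only [contr_eq_sum X, extd_ofPoly_eq_sum, wedge_sum_left, wedge_sum_right, wedge_smul_left,
    wedge_smul_right, contr_sum, contr_smul, hcar, smul_sub, sum_sub_distrib, smul_ite, smul_zero,
    sum_ite_eq, mem_univ, if_true, sum_smul, smul_smul]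

lemma contr_contr (X : Fin n → S n) (τ : Ω n) : contr X (contr X τ) = 0 := by
  simp only [contr_eq_sum X, contr_sum, contr_smul, smul_sum, smul_smul]
  refine self_eq_neg.mp ?_
  conv_lhs => rw [sum_comm]
  simp only [← sum_neg_distrib, ← smul_neg, ← contr_coordVF_anticomm, mul_comm]

lemma extd_ofPoly_mul (f g : S n) :
    extd (ofPoly (g * f)) = g • extd (ofPoly f) + f • extd (ofPoly g) := by
  simp only [extd_ofPoly_eq_sum, Derivation.leibniz, smul_sum, smul_smul, add_smul,
    sum_add_distrib, smul_eq_mul]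

lemma extd_ofPoly_C (z : ℂ) : extd (ofPoly (C z : S n)) = 0 := by
  simp [extd_ofPoly_eq_sum]

lemma contr_radial_wedge_extd_ofPoly {c : ℕ} {f : S n} (hf : f.IsHomogeneous c) (τ : Ω n) :
    contr (radial n) (wedge (extd (ofPoly f)) (contr (radial n) τ)) =
      (c : ℂ) • f • contr (radial n) τ := by
  rw [contr_wedge_extd_ofPoly, contr_contr, wedge_zero_right, sub_zero]
  change (∑ k, X k * pderiv k f) • _ = _
  rw [hf.sum_X_mul_pderiv, smul_assoc, Nat.cast_smul_eq_nsmul]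

lemma dotd_of_ne_zero {b : ℕ} (hb : b ≠ 0) (c : ℕ) (f : S n) (τ : Ω n) :
    dotd b c f τ = ((b : ℂ) + c)⁻¹ •
      ((b : ℂ) • f • τ + wedge (extd (ofPoly f)) (contr (radial n) τ)) := by
  rw [dotd, if_neg fun h => hb h.1, smul_add, smul_add, smul_smul, smul_smul]
  congr 2 <;> field_simp

lemma dotd_zero_left {c : ℕ} (hc : c ≠ 0) (f : S n) (τ : Ω n) : dotd 0 c f τ = 0 := by
  rw [dotd, if_neg fun h => hc h.2, Nat.cast_zero, zero_div, zero_smul]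

lemma dotd_zero_right (b c : ℕ) (f : S n) : dotd b c f (0 : Ω n) = 0 := by
  unfold dotd
  split_ifs <;> simp [contr_zero, wedge_zero_right]

lemma dotd_C {b : ℕ} (hb : b ≠ 0) (z : ℂ) (τ : Ω n) : dotd b 0 (C z : S n) τ = z • τ := by
  have hb' : (b : ℂ) ≠ 0 := Nat.cast_ne_zero.mpr hb
  rw [dotd_of_ne_zero hb, extd_ofPoly_C, wedge_zero_left, add_zero, Nat.cast_zero, add_zero,
    smul_smul, inv_mul_cancel₀ hb', one_smul, ← algebraMap_eq, algebraMap_smul]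

lemma contr_radial_dotd {b c : ℕ} (hb : b ≠ 0) {f : S n} (hf : f.IsHomogeneous c) (τ : Ω n) :
    contr (radial n) (dotd b c f τ) = f • contr (radial n) τ := by
  have hbc : (b : ℂ) + c ≠ 0 := by exact_mod_cast (by omega : b + c ≠ 0)
  rw [dotd_of_ne_zero hb, contr_smul, contr_add, contr_smul, contr_smul,
    contr_radial_wedge_extd_ofPoly hf, ← add_smul, smul_smul, inv_mul_cancel₀ hbc, one_smul]

lemma dotd_assoc_of_ne_zero {b c e : ℕ} (hb : b ≠ 0) {f g : S n} (hf : f.IsHomogeneous c)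
    (τ : Ω n) : dotd b (c + e) (g * f) τ = dotd (b + c) e g (dotd b c f τ) := by
  have hbc : (b : ℂ) + c ≠ 0 := by exact_mod_cast (by omega : b + c ≠ 0)
  rw [dotd_of_ne_zero hb, dotd_of_ne_zero (by omega), contr_radial_dotd hb hf,
    dotd_of_ne_zero hb, extd_ofPoly_mul, wedge_add_left, wedge_smul_left, wedge_smul_left,
    wedge_smul_right]
  push_cast
  rw [smul_comm g, smul_smul ((b : ℂ) + c), mul_inv_cancel₀ hbc, one_smul, ← add_assoc (b : ℂ),
    mul_smul, smul_add g, smul_comm g (b : ℂ), add_assoc (_ : Ω n)]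

end

/-- The operation `f ·_d τ = (b/(b+c))·(fτ + (1/b)·df∧i_Rτ)` for
homogeneous `f ∈ S(c)`, `τ ∈ Ω^r(b)` (with the usual product when `b = c = 0`) is
associative over `S`: `(gf) ·_d τ = g ·_d (f ·_d τ)`; and it extends scalar
multiplication by `ℂ`, giving an `S`-module structure on `⊕_{b ≥ 1} Ω^r(b)`. -/
theorem dotd_associative (n : ℕ) :
    (∀ (r b c e : ℕ) (f g : S n) (τ : Ω n), f.IsHomogeneous c → g.IsHomogeneous e →
      IsHomogForm τ r b →
      dotd b (c + e) (g * f) τ = dotd (b + c) e g (dotd b c f τ)) ∧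
    (∀ (z : ℂ) (r b : ℕ) (τ : Ω n), 1 ≤ b → IsHomogForm τ r b →
      dotd b 0 (C z : S n) τ = z • τ) := by
  refine ⟨fun r b c e f g τ hf _ _ => ?_, fun z r b τ hb _ => dotd_C (by omega) z τ⟩
  rcases eq_or_ne b 0 with rfl | hb
  · rcases eq_or_ne c 0 with rfl | hc
    · rcases eq_or_ne e 0 with rfl | he
      · simp only [dotd, and_self, if_true, mul_smul]
      · simp only [zero_add, dotd_zero_left he]
    · rw [dotd_zero_left (by omega), dotd_zero_left hc, dotd_zero_right]
  · exact dotd_assoc_of_ne_zero hb hf τ
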